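/- Let t, a, b, p, q, k ∈ ℂ with t ≠ 0, and let c be the braiding of type R_{1,2} on V = ℂ³ with parameters t, a, b, p, q, k. Then the kernel of id_{V⊗V} + c is nonzero if and only if t² = 1. (Equivalently, the Nichols algebra of (V, c) has quadratic relations if and only if t² = 1.) -/

import Mathlib

/-!
In the coordinates `x : Matrix (Fin 3) (Fin 3) ℂ` of `∑ xᵢⱼ • eᵢ ⊗ eⱼ`, the braiding acts as
`x ↦ t • (xᵀ + N x)`, where the entry `(i, j)` of `N x = lowerTermsR12 a b p q k x` only involves
entries of `x` of strictly larger weight `w i + w j`, for the weights `w = (0, 1, 3)`. So `id + c`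
is block triangular for this weight, with diagonal blocks `id + t • flip` on
`span {eᵢ ⊗ eⱼ, eⱼ ⊗ eᵢ}`; as `(1 + t • flip) (1 - t • flip) = 1 - t²`, these are injective when
`t² ≠ 1`, and solving in order of decreasing weight gives `ker (id + c) = 0`. Conversely, the
tensor `x₁ ⊗ x₂ - x₂ ⊗ x₁` for `t = 1`, and `x₁ ⊗ x₁` for `t = -1`, lies in the kernel.
-/

open TensorProduct

/-- `V = ℂ³`. -/
abbrev V3 : Type := Fin 3 → ℂ

/-- The standard basis vectors `x₁ = xv 0`, `x₂ = xv 1`, `x₃ = xv 2` of `ℂ³`. -/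
noncomputable def xv (i : Fin 3) : V3 := Pi.single i 1

section TensorCoordinates

variable {R ι : Type*} [CommSemiring R] [Fintype ι] [DecidableEq ι]

noncomputable def tensorBasis : Module.Basis (ι × ι) R ((ι → R) ⊗[R] (ι → R)) :=
  (Pi.basisFun R ι).tensorProduct (Pi.basisFun R ι)

theorem tensorBasis_apply (i j : ι) :
    (tensorBasis (i, j) : (ι → R) ⊗[R] (ι → R)) = Pi.single i 1 ⊗ₜ Pi.single j 1 := by
  simp [tensorBasis, Module.Basis.tensorProduct_apply]

noncomputable def tensorMatrixEquiv : Matrix ι ι R ≃ₗ[R] (ι → R) ⊗[R] (ι → R) :=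
  (LinearEquiv.curry R R ι ι ≪≫ₗ Matrix.ofLinearEquiv R).symm ≪≫ₗ tensorBasis.equivFun.symm

theorem tensorMatrixEquiv_apply (x : Matrix ι ι R) :
    tensorMatrixEquiv x = ∑ i, ∑ j, x i j • (Pi.single i 1 ⊗ₜ[R] Pi.single j 1) := by
  simp [tensorMatrixEquiv, Module.Basis.equivFun_symm_apply, Fintype.sum_prod_type,
    tensorBasis_apply]

end TensorCoordinates

open Matrix

theorem Module.End.ker_id_add_ne_bot_of_apply_eq_neg {R M : Type*} [Ring R] [AddCommGroup M]
    [Module R M] (f : M →ₗ[R] M) {w : M} (hw : w ≠ 0) (hfw : f w = -w) :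
    LinearMap.ker (LinearMap.id + f) ≠ ⊥ :=
  (Submodule.ne_bot_iff _).2 ⟨w, by simp [hfw], hw⟩

theorem eq_zero_and_eq_zero_of_add_mul_swap {K : Type*} [CommRing K] [NoZeroDivisors K]
    {t x y : K} (ht : t ^ 2 ≠ 1) (hx : x + t * y = 0) (hy : y + t * x = 0) : x = 0 ∧ y = 0 := by
  have h1 : 1 - t ^ 2 ≠ 0 := sub_ne_zero.2 (Ne.symm ht)
  have hx' : (1 - t ^ 2) * x = 0 := by linear_combination hx - t * hy
  have hy' : (1 - t ^ 2) * y = 0 := by linear_combination hy - t * hx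
  exact ⟨(mul_eq_zero.1 hx').resolve_left h1, (mul_eq_zero.1 hy').resolve_left h1⟩

structure IsBraidingR12 (t a b p q k : ℂ) (c : V3 ⊗[ℂ] V3 →ₗ[ℂ] V3 ⊗[ℂ] V3) : Prop where
  apply_00 : c (xv 0 ⊗ₜ[ℂ] xv 0) = t • (xv 0 ⊗ₜ[ℂ] xv 0)
  apply_10 : c (xv 1 ⊗ₜ[ℂ] xv 0) = t • (xv 0 ⊗ₜ[ℂ] xv 1)
  apply_20 : c (xv 2 ⊗ₜ[ℂ] xv 0) = t • (xv 0 ⊗ₜ[ℂ] xv 2) + (t * b) • (xv 0 ⊗ₜ[ℂ] xv 0)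
  apply_01 : c (xv 0 ⊗ₜ[ℂ] xv 1) = t • (xv 1 ⊗ₜ[ℂ] xv 0)
  apply_11 : c (xv 1 ⊗ₜ[ℂ] xv 1) = t • (xv 1 ⊗ₜ[ℂ] xv 1)
  apply_21 : c (xv 2 ⊗ₜ[ℂ] xv 1) = t • (xv 1 ⊗ₜ[ℂ] xv 2) + (t * b) • (xv 1 ⊗ₜ[ℂ] xv 0)
      + (t * (p - q)) • (xv 0 ⊗ₜ[ℂ] xv 1)
  apply_02 : c (xv 0 ⊗ₜ[ℂ] xv 2) = t • (xv 2 ⊗ₜ[ℂ] xv 0) + (t * p) • (xv 0 ⊗ₜ[ℂ] xv 0)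
  apply_12 : c (xv 1 ⊗ₜ[ℂ] xv 2) = t • (xv 2 ⊗ₜ[ℂ] xv 1) + (t * q) • (xv 0 ⊗ₜ[ℂ] xv 1)
  apply_22 : c (xv 2 ⊗ₜ[ℂ] xv 2) = t • (xv 2 ⊗ₜ[ℂ] xv 2) + (t * b) • (xv 2 ⊗ₜ[ℂ] xv 0)
      + (t * p) • (xv 0 ⊗ₜ[ℂ] xv 2) - (t * k) • (xv 1 ⊗ₜ[ℂ] xv 0)
      + (t * k) • (xv 0 ⊗ₜ[ℂ] xv 1) + (t * a) • (xv 0 ⊗ₜ[ℂ] xv 0)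

def lowerTermsR12 (a b p q k : ℂ) (x : Matrix (Fin 3) (Fin 3) ℂ) : Matrix (Fin 3) (Fin 3) ℂ :=
  !![p * x 0 2 + b * x 2 0 + a * x 2 2, q * x 1 2 + (p - q) * x 2 1 + k * x 2 2, p * x 2 2;
     b * x 2 1 - k * x 2 2, 0, 0;
     b * x 2 2, 0, 0]

theorem eq_zero_of_add_smul_transpose_add_lowerTermsR12 {t a b p q k : ℂ} (ht : t ^ 2 ≠ 1)
    {x : Matrix (Fin 3) (Fin 3) ℂ} (h : x + t • (xᵀ + lowerTermsR12 a b p q k x) = 0) :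
    x = 0 := by
  have e : ∀ i j, x i j + t * (x j i + lowerTermsR12 a b p q k x i j) = 0 := fun i j => by
    simpa [mul_add] using congrFun (congrFun h i) j
  simp only [lowerTermsR12, Fin.isValue, of_apply, cons_val', cons_val_fin_one,
    Fin.forall_fin_succ, cons_val_zero, cons_val_succ, Fin.succ_zero_eq_one, Fin.succ_one_eq_two,
    IsEmpty.forall_iff, and_true, add_zero] at e
  obtain ⟨⟨e00, e01, e02⟩, ⟨e10, e11, e12⟩, ⟨e20, e21, e22⟩⟩ := e
  have solve (u v : ℂ) := eq_zero_and_eq_zero_of_add_mul_swap (x := u) (y := v) ht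
  obtain ⟨h22, -⟩ := solve _ _ e22 e22
  obtain ⟨h11, -⟩ := solve _ _ e11 e11
  obtain ⟨h12, h21⟩ := solve _ _ e12 e21
  obtain ⟨h02, h20⟩ := solve (x 0 2) (x 2 0) (by linear_combination e02 - t * p * h22)
    (by linear_combination e20 - t * b * h22)
  obtain ⟨h01, h10⟩ := solve (x 0 1) (x 1 0)
    (by linear_combination e01 - t * q * h12 - t * (p - q) * h21 - t * k * h22)
    (by linear_combination e10 - t * b * h21 + t * k * h22)
  obtain ⟨h00, -⟩ := solve (x 0 0) (x 0 0)
    (by linear_combination e00 - t * p * h02 - t * b * h20 - t * a * h22)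
    (by linear_combination e00 - t * p * h02 - t * b * h20 - t * a * h22)
  ext i j
  fin_cases i <;> fin_cases j <;> assumption

namespace IsBraidingR12

variable {t a b p q k : ℂ} {c : V3 ⊗[ℂ] V3 →ₗ[ℂ] V3 ⊗[ℂ] V3}

theorem apply_tensorMatrixEquiv (hc : IsBraidingR12 t a b p q k c)
    (x : Matrix (Fin 3) (Fin 3) ℂ) :
    c (tensorMatrixEquiv x) = tensorMatrixEquiv (t • (xᵀ + lowerTermsR12 a b p q k x)) := by
  have hxv (i : Fin 3) : (Pi.single i 1 : V3) = xv i := rfl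
  simp only [tensorMatrixEquiv_apply, hxv, Fin.sum_univ_three, map_add, map_smul, hc.apply_00,
    hc.apply_10, hc.apply_20, hc.apply_01, hc.apply_11, hc.apply_21, hc.apply_02, hc.apply_12,
    hc.apply_22]
  simp [lowerTermsR12]
  module

theorem ker_id_add_eq_bot (hc : IsBraidingR12 t a b p q k c) (ht : t ^ 2 ≠ 1) :
    LinearMap.ker (LinearMap.id + c) = ⊥ := by
  refine LinearMap.ker_eq_bot'.2 fun v hv => ?_
  obtain ⟨x, rfl⟩ := tensorMatrixEquiv.surjective v
  have hx : tensorMatrixEquiv (x + t • (xᵀ + lowerTermsR12 a b p q k x)) = 0 := by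
    rwa [map_add, ← hc.apply_tensorMatrixEquiv]
  rw [eq_zero_of_add_smul_transpose_add_lowerTermsR12 ht (tensorMatrixEquiv.map_eq_zero_iff.1 hx),
    map_zero]

theorem ker_id_add_ne_bot (hc : IsBraidingR12 t a b p q k c) (ht : t ^ 2 = 1) :
    LinearMap.ker (LinearMap.id + c) ≠ ⊥ := by
  have hxv (i j : Fin 3) : xv i ⊗ₜ[ℂ] xv j = tensorBasis (i, j) := (tensorBasis_apply i j).symm
  obtain rfl | rfl : t = 1 ∨ t = -1 := sq_eq_one_iff.1 ht
  · refine Module.End.ker_id_add_ne_bot_of_apply_eq_neg c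
      (w := xv 0 ⊗ₜ xv 1 - xv 1 ⊗ₜ xv 0) ?_ ?_
    · rw [sub_ne_zero, hxv, hxv]
      exact tensorBasis.injective.ne (by decide)
    · rw [map_sub, hc.apply_01, hc.apply_10]
      module
  · refine Module.End.ker_id_add_ne_bot_of_apply_eq_neg c (w := xv 0 ⊗ₜ xv 0) ?_ ?_
    · rw [hxv]
      exact tensorBasis.ne_zero _
    · rw [hc.apply_00]
      module

end IsBraidingR12

theorem quadratic_relations_R12_iff (t a b p q k : ℂ)
    (c : V3 ⊗[ℂ] V3 →ₗ[ℂ] V3 ⊗[ℂ] V3)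
    (h11 : c (xv 0 ⊗ₜ[ℂ] xv 0) = t • (xv 0 ⊗ₜ[ℂ] xv 0))
    (h21 : c (xv 1 ⊗ₜ[ℂ] xv 0) = t • (xv 0 ⊗ₜ[ℂ] xv 1))
    (h31 : c (xv 2 ⊗ₜ[ℂ] xv 0) = t • (xv 0 ⊗ₜ[ℂ] xv 2) + (t * b) • (xv 0 ⊗ₜ[ℂ] xv 0))
    (h12 : c (xv 0 ⊗ₜ[ℂ] xv 1) = t • (xv 1 ⊗ₜ[ℂ] xv 0))
    (h22 : c (xv 1 ⊗ₜ[ℂ] xv 1) = t • (xv 1 ⊗ₜ[ℂ] xv 1))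
    (h32 : c (xv 2 ⊗ₜ[ℂ] xv 1) = t • (xv 1 ⊗ₜ[ℂ] xv 2) + (t * b) • (xv 1 ⊗ₜ[ℂ] xv 0)
      + (t * (p - q)) • (xv 0 ⊗ₜ[ℂ] xv 1))
    (h13 : c (xv 0 ⊗ₜ[ℂ] xv 2) = t • (xv 2 ⊗ₜ[ℂ] xv 0) + (t * p) • (xv 0 ⊗ₜ[ℂ] xv 0))
    (h23 : c (xv 1 ⊗ₜ[ℂ] xv 2) = t • (xv 2 ⊗ₜ[ℂ] xv 1) + (t * q) • (xv 0 ⊗ₜ[ℂ] xv 1))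
    (h33 : c (xv 2 ⊗ₜ[ℂ] xv 2) = t • (xv 2 ⊗ₜ[ℂ] xv 2) + (t * b) • (xv 2 ⊗ₜ[ℂ] xv 0)
      + (t * p) • (xv 0 ⊗ₜ[ℂ] xv 2) - (t * k) • (xv 1 ⊗ₜ[ℂ] xv 0)
      + (t * k) • (xv 0 ⊗ₜ[ℂ] xv 1) + (t * a) • (xv 0 ⊗ₜ[ℂ] xv 0)) :
    LinearMap.ker (LinearMap.id + c) ≠ ⊥ ↔ t ^ 2 = 1 := by
  have hc : IsBraidingR12 t a b p q k c := ⟨h11, h21, h31, h12, h22, h32, h13, h23, h33⟩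
  exact ⟨fun hker => by_contra fun ht => hker (hc.ker_id_add_eq_bot ht), hc.ker_id_add_ne_bot⟩
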